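/- Let $\{m_n\}_{n\ge 0}$ be a non-decreasing sequence of positive integers and $W_n \in \mathbb{R}^{m_n \times m_{n-1}}$ satisfy $W_n = I_{m_n,m_{n-1}} + P_n$ with $\sum_{n=1}^\infty \|P_n\|_p < +\infty$. Then for any choice of diagonal $0$-$1$ matrices $J_n \in \mathcal{D}_{m_n}$, the sequence of operators $I_{\infty,m_n} \prod_{i=1}^n J_i W_i$ (viewed as bounded linear operators from $\mathbb{R}^{m_0}$ to $\ell^p$) converges in operator norm as $n \to \infty$. -/

import Mathlib

open scoped ENNReal
open Matrix Filter

noncomputable section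


/-- The `m' × m` matrix with the identity on top and zero rows below. -/
def Ipad (m' m : ℕ) : Matrix (Fin m') (Fin m) ℝ :=
  Matrix.of fun i j => if (i : ℕ) = (j : ℕ) then 1 else 0

/-- The diagonal entries of an activation matrix are 0 or 1. -/
def ZeroOne {m : ℕ} (J : Fin m → ℝ) : Prop := ∀ i, J i = 0 ∨ J i = 1

/-- A matrix viewed as a bounded linear operator between `ℓ^p` spaces `ℝ^a → ℝ^b`. -/
def matCLM (p : ℝ≥0∞) [Fact (1 ≤ p)] {a b : ℕ} (A : Matrix (Fin b) (Fin a) ℝ) :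
    PiLp p (fun _ : Fin a => ℝ) →L[ℝ] PiLp p (fun _ : Fin b => ℝ) :=
  LinearMap.toContinuousLinearMap <|
    (WithLp.linearEquiv p ℝ (Fin b → ℝ)).symm.toLinearMap ∘ₗ
      A.mulVecLin ∘ₗ (WithLp.linearEquiv p ℝ (Fin a → ℝ)).toLinearMap

/-- Zero-padding of a finite vector into `ℓ^p`. -/
def padLp (p : ℝ≥0∞) [Fact (1 ≤ p)] {m : ℕ} (x : Fin m → ℝ) : lp (fun _ : ℕ => ℝ) p :=
  ∑ i : Fin m, lp.single p (i : ℕ) (x i)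

/-- Zero-padding as a bounded linear operator `ℝ^m → ℓ^p`. -/
def padCLM (p : ℝ≥0∞) [Fact (1 ≤ p)] (m : ℕ) :
    PiLp p (fun _ : Fin m => ℝ) →L[ℝ] lp (fun _ : ℕ => ℝ) p :=
  LinearMap.toContinuousLinearMap
    { toFun := fun x => padLp p ((WithLp.linearEquiv p ℝ (Fin m → ℝ)) x)
      map_add' := by
        intro x y
        simp only [padLp, WithLp.linearEquiv_apply]
        rw [← Finset.sum_add_distrib]
        refine Finset.sum_congr rfl fun i _ => ?_
        apply lp.ext
        funext j
        by_cases h : j = (i : ℕ)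
        · subst h
          simp [lp.single_apply_self]
        · simp [lp.single_apply_ne p _ _ h]
      map_smul' := by
        intro c x
        simp only [padLp, WithLp.linearEquiv_apply, RingHom.id_apply, Finset.smul_sum]
        refine Finset.sum_congr rfl fun i _ => ?_
        rw [show (WithLp.addEquiv p (Fin m → ℝ)).toFun (c • x) i = c • (WithLp.addEquiv p (Fin m → ℝ)).toFun x i from rfl,
          lp.single_smul] }


/-- Componentwise ReLU. -/
def relu {m : ℕ} (x : Fin m → ℝ) : Fin m → ℝ := fun i => max (x i) 0

/-- The unit cube `[0,1]^d`. -/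
def cube (d : ℕ) : Set (Fin d → ℝ) := {x | ∀ i, x i ∈ Set.Icc (0:ℝ) 1}

variable {m : ℕ → ℕ}

/-- The deep ReLU network `N_n(x) = σ(W_n · + b_n) ∘ ⋯ ∘ σ(W_1 · + b_1) (x)`. -/
def net (W : ∀ n, Matrix (Fin (m (n+1))) (Fin (m n)) ℝ) (b : ∀ n, Fin (m (n+1)) → ℝ)
    (x : Fin (m 0) → ℝ) : ∀ n, Fin (m n) → ℝ
  | 0 => x
  | n+1 => relu (W n *ᵥ net W b x n + b n)

/-- The product `J_n W_n ⋯ J_1 W_1`. -/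
def prodJW (W : ∀ n, Matrix (Fin (m (n+1))) (Fin (m n)) ℝ)
    (J : ∀ n, Fin (m (n+1)) → ℝ) : ∀ n, Matrix (Fin (m n)) (Fin (m 0)) ℝ
  | 0 => 1
  | n+1 => (Matrix.diagonal (J n) * W n) * prodJW W J n

/-- The product `J_{i+t} W_{i+t} ⋯ J_{i+1} W_{i+1}` (product of `t` factors starting at layer `i+1`). -/
def prodJWFrom (W : ∀ n, Matrix (Fin (m (n+1))) (Fin (m n)) ℝ)
    (J : ∀ n, Fin (m (n+1)) → ℝ) (i : ℕ) : ∀ t, Matrix (Fin (m (i+t))) (Fin (m i)) ℝ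
  | 0 => (1 : Matrix (Fin (m i)) (Fin (m i)) ℝ)
  | t+1 => (Matrix.diagonal (J (i+t)) * W (i+t)) * prodJWFrom W J i t

/-- `∑_{i=1}^n (∏_{k=i+1}^n J_k W_k) J_i b_i`, defined by the recursion
`c_0 = 0`, `c_{n+1} = J_{n+1} W_{n+1} c_n + J_{n+1} b_{n+1}`. -/
def biasSum (W : ∀ n, Matrix (Fin (m (n+1))) (Fin (m n)) ℝ)
    (J : ∀ n, Fin (m (n+1)) → ℝ) (b : ∀ n, Fin (m (n+1)) → ℝ) : ∀ n, Fin (m n) → ℝ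
  | 0 => 0
  | n+1 => (Matrix.diagonal (J n) * W n) *ᵥ biasSum W J b n + Matrix.diagonal (J n) *ᵥ b n

/-- Activation domain of a one-layer network. -/
def actDom {a c : ℕ} (J : Fin c → ℝ) (W : Matrix (Fin c) (Fin a) ℝ) (b : Fin c → ℝ) :
    Set (Fin a → ℝ) :=
  {x | ∀ j, (J j = 1 → 0 < (W *ᵥ x + b) j) ∧ (J j ≠ 1 → (W *ᵥ x + b) j ≤ 0)}

/-- Activation domains of a multi-layer network. -/
def actDomMulti (W : ∀ n, Matrix (Fin (m (n+1))) (Fin (m n)) ℝ)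
    (J : ∀ n, Fin (m (n+1)) → ℝ) (b : ∀ n, Fin (m (n+1)) → ℝ) : ℕ → Set (Fin (m 0) → ℝ)
  | 0 => cube (m 0)
  | n+1 => {x ∈ actDomMulti W J b n | net W b x n ∈ actDom (J n) (W n) (b n)}

/-- The Toeplitz matrix of a filter mask `w = (w_0, …, w_s)`. -/
def toep (s mm : ℕ) (w : Fin (s+1) → ℝ) : Matrix (Fin (mm + s)) (Fin mm) ℝ :=
  Matrix.of fun i j =>
    if h : (j : ℕ) ≤ (i : ℕ) ∧ (i : ℕ) - (j : ℕ) ≤ s then w ⟨(i : ℕ) - (j : ℕ), by omega⟩ else 0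

/-- The widths of a CNN: `m_0 = d`, `m_n = m_{n-1} + s_n`. -/
def cnnWidth (d : ℕ) (s : ℕ → ℕ) : ℕ → ℕ
  | 0 => d
  | n+1 => cnnWidth d s n + s n

/-- The CNN: layer `n+1` maps `x ↦ σ(x * w^{(n+1)} + b_{n+1})`. -/
def cnnNet (d : ℕ) (s : ℕ → ℕ) (w : ∀ n, Fin (s n + 1) → ℝ)
    (b : ∀ n, Fin (cnnWidth d s (n+1)) → ℝ) (x : Fin d → ℝ) :
    ∀ n, Fin (cnnWidth d s n) → ℝ
  | 0 => x
  | n+1 => relu (fun i => (toep (s n) (cnnWidth d s n) (w n) *ᵥ cnnNet d s w b x n) i + b n i)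



/-!
Split the product after layer `n` as `(J_{n+t} W_{n+t} ⋯ J_{n+1} W_{n+1}) · (J_n W_n ⋯ J_1 W_1)`
and compare the first factor with the unperturbed one, where every `W_k` is `I`. Padded into
`ℓ^p`, the unperturbed factor acts on the first `m_n` coordinates as a diagonal matrix whose
entries are products of `0`s and `1`s, hence eventually constant in `t`. Since every `J_k I` is a
contraction, the perturbation changes the factor by at most
`∏ (1 + ‖P_k‖) - 1 ≤ exp (∑_{k ≥ n} ‖P_k‖) - 1`, which tends to `0` with `n`. So the sequence is
Cauchy, and the space of operators is complete.
-/

section MatCLM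

variable (p : ℝ≥0∞) [Fact (1 ≤ p)] {a b c : ℕ}

@[simp]
lemma ofLp_matCLM (A : Matrix (Fin b) (Fin a) ℝ) (x : PiLp p (fun _ : Fin a => ℝ)) :
    (matCLM p A x).ofLp = A *ᵥ x.ofLp := rfl

lemma matCLM_mul (A : Matrix (Fin c) (Fin b) ℝ) (B : Matrix (Fin b) (Fin a) ℝ) :
    matCLM p (A * B) = (matCLM p A).comp (matCLM p B) := by
  ext x i
  simp [Matrix.mulVec_mulVec]

lemma matCLM_add (A B : Matrix (Fin b) (Fin a) ℝ) :
    matCLM p (A + B) = matCLM p A + matCLM p B := by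
  ext x i
  simp [Matrix.add_mulVec]

lemma matCLM_one : matCLM p (1 : Matrix (Fin a) (Fin a) ℝ) = ContinuousLinearMap.id ℝ _ := by
  ext x i
  simp

end MatCLM

lemma PiLp.norm_le_norm_of_forall_le {p : ℝ≥0∞} [Fact (1 ≤ p)] {ι : Type*} [Fintype ι]
    {β : ι → Type*} [∀ i, SeminormedAddCommGroup (β i)] {f g : PiLp p β}
    (h : ∀ i, ‖f i‖ ≤ ‖g i‖) : ‖f‖ ≤ ‖g‖ := by
  rcases p.dichotomy with rfl | hp
  · rw [PiLp.norm_eq_ciSup]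
    exact Real.iSup_le (fun i => (h i).trans (PiLp.norm_apply_le g i)) (norm_nonneg _)
  · have hp0 : 0 < p.toReal := by linarith
    rw [PiLp.norm_eq_sum hp0, PiLp.norm_eq_sum hp0]
    gcongr with i
    exact h i

lemma ZeroOne.abs_le_one {a : ℕ} {d : Fin a → ℝ} (hd : ZeroOne d) (i : Fin a) : |d i| ≤ 1 := by
  rcases hd i with h | h <;> simp [h]

section Diagonal

variable (p : ℝ≥0∞) [Fact (1 ≤ p)] {a b : ℕ} {d : Fin b → ℝ}

lemma norm_matCLM_diagonal_le (hd : ∀ i, |d i| ≤ 1) : ‖matCLM p (diagonal d)‖ ≤ 1 := by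
  refine ContinuousLinearMap.opNorm_le_bound _ zero_le_one fun x => ?_
  rw [one_mul]
  refine PiLp.norm_le_norm_of_forall_le fun i => ?_
  simpa [Matrix.mulVec_diagonal, abs_mul] using mul_le_of_le_one_left (abs_nonneg _) (hd i)

lemma norm_matCLM_diagonal_mul_le (hd : ∀ i, |d i| ≤ 1) (A : Matrix (Fin b) (Fin a) ℝ) :
    ‖matCLM p (diagonal d * A)‖ ≤ ‖matCLM p A‖ := by
  rw [matCLM_mul]
  exact (ContinuousLinearMap.opNorm_comp_le _ _).trans
    (mul_le_of_le_one_left (norm_nonneg _) (norm_matCLM_diagonal_le p hd))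

end Diagonal

def zeroExtend {a : ℕ} (x : Fin a → ℝ) (j : ℕ) : ℝ := if h : j < a then x ⟨j, h⟩ else 0

lemma zeroExtend_coe {a : ℕ} (x : Fin a → ℝ) (i : Fin a) : zeroExtend x i = x i := by
  simp [zeroExtend]

lemma zeroExtend_eq_sum {a : ℕ} (x : Fin a → ℝ) (j : ℕ) :
    zeroExtend x j = ∑ i : Fin a, if (i : ℕ) = j then x i else 0 := by
  unfold zeroExtend
  split_ifs with h
  · rw [Finset.sum_eq_single ⟨j, h⟩] <;> simp +contextual [Fin.ext_iff]
  · refine (Finset.sum_eq_zero fun i _ => if_neg fun hi => h ?_).symm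
    exact hi ▸ i.isLt

lemma Ipad_mulVec {a b : ℕ} (y : Fin a → ℝ) (i : Fin b) : (Ipad b a *ᵥ y) i = zeroExtend y i := by
  simp [Ipad, Matrix.mulVec, dotProduct, zeroExtend_eq_sum, eq_comm]

section Pad

variable (p : ℝ≥0∞) [Fact (1 ≤ p)] {a b : ℕ}

@[simp]
lemma padLp_apply (x : Fin a → ℝ) (j : ℕ) : padLp p x j = zeroExtend x j := by
  rw [padLp, lp.coeFn_sum, Finset.sum_apply]
  simp [zeroExtend_eq_sum, Pi.single_apply, eq_comm]

lemma padCLM_apply (x : PiLp p (fun _ : Fin a => ℝ)) : padCLM p a x = padLp p x.ofLp := rfl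

lemma norm_padCLM_apply (x : PiLp p (fun _ : Fin a => ℝ)) : ‖padCLM p a x‖ = ‖x‖ := by
  rw [padCLM_apply]
  rcases p.dichotomy with rfl | hp
  · refine le_antisymm (lp.norm_le_of_forall_le (norm_nonneg _) fun j => ?_) ?_
    · simp only [padLp_apply, zeroExtend]
      split_ifs
      · exact PiLp.norm_apply_le x _
      · simp
    · rw [PiLp.norm_eq_ciSup]
      refine Real.iSup_le (fun i => ?_) (norm_nonneg _)
      simpa [zeroExtend_coe] using lp.norm_apply_le_norm ENNReal.top_ne_zero (padLp ∞ x.ofLp) i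
  · have hp0 : 0 < p.toReal := by linarith
    have hsum : padLp p x.ofLp = ∑ j ∈ (Finset.univ : Finset (Fin a)).map Fin.valEmbedding,
        lp.single p j (zeroExtend x.ofLp j) := by
      rw [padLp, Finset.sum_map]
      simp only [Fin.valEmbedding_apply, zeroExtend_coe]
    have hpow : ‖padLp p x.ofLp‖ ^ p.toReal = ∑ i, ‖x i‖ ^ p.toReal := by
      rw [hsum, lp.norm_sum_single hp0, Finset.sum_map]
      simp only [Fin.valEmbedding_apply, zeroExtend_coe]
    rw [PiLp.norm_eq_sum hp0, ← hpow, ← Real.rpow_mul (norm_nonneg _), mul_one_div_cancel hp0.ne',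
      Real.rpow_one]

lemma norm_padCLM_le : ‖padCLM p a‖ ≤ 1 :=
  ContinuousLinearMap.opNorm_le_bound _ zero_le_one fun x => by rw [norm_padCLM_apply, one_mul]

lemma padCLM_comp_matCLM_Ipad (hab : a ≤ b) :
    (padCLM p b).comp (matCLM p (Ipad b a)) = padCLM p a := by
  ext x j
  simp only [ContinuousLinearMap.comp_apply, padCLM_apply, padLp_apply, ofLp_matCLM, Ipad_mulVec,
    zeroExtend]
  split_ifs <;> first | rfl | omega

lemma norm_matCLM_Ipad_le (hab : a ≤ b) : ‖matCLM p (Ipad b a)‖ ≤ 1 :=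
  ContinuousLinearMap.opNorm_le_bound _ zero_le_one fun x => by
    rw [one_mul, ← norm_padCLM_apply, ← ContinuousLinearMap.comp_apply,
      padCLM_comp_matCLM_Ipad p hab, norm_padCLM_apply]

end Pad

lemma zeroExtend_diagonal_mul_Ipad_mulVec {a b : ℕ} (d : Fin b → ℝ) (y : Fin a → ℝ) (j : ℕ) :
    zeroExtend ((diagonal d * Ipad b a) *ᵥ y) j = zeroExtend d j * zeroExtend y j := by
  simp only [zeroExtend, ← Matrix.mulVec_mulVec, Matrix.mulVec_diagonal, Ipad_mulVec]
  split_ifs <;> simp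

lemma ZeroOne.zeroExtend {a : ℕ} {d : Fin a → ℝ} (hd : ZeroOne d) (j : ℕ) :
    zeroExtend d j = 0 ∨ zeroExtend d j = 1 := by
  unfold _root_.zeroExtend
  split_ifs
  exacts [hd _, Or.inl rfl]

lemma Filter.eventuallyConst_pi {α ι β : Type*} [Finite ι] [Nonempty β] {l : Filter α}
    {f : α → ι → β} : EventuallyConst f l ↔ ∀ i, EventuallyConst (fun a => f a i) l := by
  refine ⟨fun h i => h.apply i, fun h => ?_⟩
  simp only [eventuallyConst_iff_exists_eventuallyEq] at h ⊢
  choose c hc using h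
  exact ⟨c, (eventually_all.2 hc).mono fun _ ha => funext ha⟩

lemma eventuallyConst_prod_range {M : Type*} [CommMonoidWithZero M] {f : ℕ → M}
    (hf : ∀ k, f k = 0 ∨ f k = 1) : EventuallyConst (fun t => ∏ k ∈ Finset.range t, f k) atTop := by
  by_cases h : ∃ k, f k = 0
  · obtain ⟨k, hk⟩ := h
    refine eventuallyConst_atTop.2 ⟨k + 1, fun t ht => ?_⟩
    rw [Finset.prod_eq_zero (Finset.mem_range.2 (by omega)) hk,
      Finset.prod_eq_zero (Finset.mem_range.2 (by omega)) hk]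
  · push Not at h
    simp only [fun k => (hf k).resolve_left (h k), Finset.prod_const_one]
    exact .const 1

def Ipads (m : ℕ → ℕ) (n : ℕ) : Matrix (Fin (m (n + 1))) (Fin (m n)) ℝ := Ipad (m (n + 1)) (m n)

def maskProd (J : ∀ n, Fin (m (n + 1)) → ℝ) (n t j : ℕ) : ℝ :=
  ∏ k ∈ Finset.range t, zeroExtend (J (n + k)) j

lemma zeroExtend_prodJWFrom_Ipads_mulVec (J : ∀ n, Fin (m (n + 1)) → ℝ) (n t : ℕ)
    (y : Fin (m n) → ℝ) (j : ℕ) :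
    zeroExtend (prodJWFrom (Ipads m) J n t *ᵥ y) j = maskProd J n t j * zeroExtend y j := by
  induction t with
  | zero => simp [prodJWFrom, maskProd]
  | succ t ih =>
    calc zeroExtend (prodJWFrom (Ipads m) J n (t + 1) *ᵥ y) j
        = zeroExtend (J (n + t)) j * zeroExtend (prodJWFrom (Ipads m) J n t *ᵥ y) j := by
          rw [prodJWFrom, ← Matrix.mulVec_mulVec]
          exact zeroExtend_diagonal_mul_Ipad_mulVec _ _ _
      _ = maskProd J n (t + 1) j * zeroExtend y j := by
          rw [ih, maskProd, maskProd, Finset.prod_range_succ]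
          ring

section Pure

variable (p : ℝ≥0∞) [Fact (1 ≤ p)] (J : ∀ n, Fin (m (n + 1)) → ℝ)

lemma padCLM_comp_matCLM_prodJWFrom_Ipads (n t : ℕ) :
    (padCLM p (m (n + t))).comp (matCLM p (prodJWFrom (Ipads m) J n t)) =
      (padCLM p (m n)).comp (matCLM p (diagonal fun j : Fin (m n) => maskProd J n t j)) := by
  ext x j
  simp only [ContinuousLinearMap.comp_apply, padCLM_apply, padLp_apply, ofLp_matCLM,
    zeroExtend_prodJWFrom_Ipads_mulVec]
  unfold zeroExtend
  split_ifs <;> simp [Matrix.mulVec_diagonal]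

lemma eventuallyConst_padCLM_comp_prodJWFrom_Ipads_mul (hJ : ∀ n, ZeroOne (J n)) {a n : ℕ}
    (A : Matrix (Fin (m n)) (Fin a) ℝ) :
    EventuallyConst
      (fun t => (padCLM p (m (n + t))).comp (matCLM p (prodJWFrom (Ipads m) J n t * A))) atTop := by
  have hmask : EventuallyConst (fun t (j : Fin (m n)) => maskProd J n t j) atTop :=
    Filter.eventuallyConst_pi.2 fun j =>
      eventuallyConst_prod_range fun k => (hJ (n + k)).zeroExtend j
  simp_rw [matCLM_mul, ← ContinuousLinearMap.comp_assoc, padCLM_comp_matCLM_prodJWFrom_Ipads]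
  exact hmask.comp fun q => ((padCLM p (m n)).comp (matCLM p (diagonal q))).comp (matCLM p A)

end Pure

lemma prodJW_add (W : ∀ n, Matrix (Fin (m (n + 1))) (Fin (m n)) ℝ) (J : ∀ n, Fin (m (n + 1)) → ℝ)
    (n t : ℕ) : prodJW W J (n + t) = prodJWFrom W J n t * prodJW W J n := by
  induction t with
  | zero => exact (Matrix.one_mul _).symm
  | succ t ih =>
    change diagonal (J (n + t)) * W (n + t) * prodJW W J (n + t) = _
    rw [ih, prodJWFrom]
    simp only [Matrix.mul_assoc]

section Perturbation

variable (p : ℝ≥0∞) [Fact (1 ≤ p)] (J : ∀ n, Fin (m (n + 1)) → ℝ)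

lemma norm_matCLM_prodJW_le (W : ∀ n, Matrix (Fin (m (n + 1))) (Fin (m n)) ℝ) {c : ℕ → ℝ}
    (hc : ∀ k, ‖matCLM p (diagonal (J k) * W k)‖ ≤ c k) (n : ℕ) :
    ‖matCLM p (prodJW W J n)‖ ≤ ∏ k ∈ Finset.range n, c k := by
  induction n with
  | zero => simpa [prodJW, matCLM_one] using ContinuousLinearMap.norm_id_le
  | succ n ih =>
    rw [prodJW, matCLM_mul, Finset.prod_range_succ, mul_comm]
    exact (ContinuousLinearMap.opNorm_comp_le _ _).trans
      (mul_le_mul (hc n) ih (norm_nonneg _) ((norm_nonneg _).trans (hc n)))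

lemma norm_matCLM_prodJWFrom_le (W : ∀ n, Matrix (Fin (m (n + 1))) (Fin (m n)) ℝ) {c : ℕ → ℝ}
    (hc : ∀ k, ‖matCLM p (diagonal (J k) * W k)‖ ≤ c k) (n t : ℕ) :
    ‖matCLM p (prodJWFrom W J n t)‖ ≤ ∏ k ∈ Finset.range t, c (n + k) := by
  induction t with
  | zero => simpa [prodJWFrom, matCLM_one] using ContinuousLinearMap.norm_id_le
  | succ t ih =>
    rw [prodJWFrom, matCLM_mul, Finset.prod_range_succ, mul_comm]
    exact (ContinuousLinearMap.opNorm_comp_le _ _).trans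
      (mul_le_mul (hc _) ih (norm_nonneg _) ((norm_nonneg _).trans (hc _)))

variable {W V P : ∀ n, Matrix (Fin (m (n + 1))) (Fin (m n)) ℝ} {δ : ℕ → ℝ}

lemma norm_matCLM_diagonal_mul_add_le (hV : ∀ k, ‖matCLM p (diagonal (J k) * V k)‖ ≤ 1)
    (hP : ∀ k, ‖matCLM p (diagonal (J k) * P k)‖ ≤ δ k) (k : ℕ) :
    ‖matCLM p (diagonal (J k) * (V k + P k))‖ ≤ 1 + δ k := by
  rw [Matrix.mul_add, matCLM_add]
  exact (norm_add_le _ _).trans (add_le_add (hV k) (hP k))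

lemma norm_matCLM_prodJWFrom_sub_le (hW : ∀ k, W k = V k + P k)
    (hV : ∀ k, ‖matCLM p (diagonal (J k) * V k)‖ ≤ 1)
    (hP : ∀ k, ‖matCLM p (diagonal (J k) * P k)‖ ≤ δ k) (n t : ℕ) :
    ‖matCLM p (prodJWFrom W J n t) - matCLM p (prodJWFrom V J n t)‖ ≤
      ∏ k ∈ Finset.range t, (1 + δ (n + k)) - 1 := by
  have hDW : ∀ k, ‖matCLM p (diagonal (J k) * W k)‖ ≤ 1 + δ k := fun k => by
    rw [hW]
    exact norm_matCLM_diagonal_mul_add_le p J hV hP k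
  induction t with
  | zero => simp [prodJWFrom]
  | succ t ih =>
    set DV := matCLM p (diagonal (J (n + t)) * V (n + t))
    set DP := matCLM p (diagonal (J (n + t)) * P (n + t))
    set FW := matCLM p (prodJWFrom W J n t)
    set FV := matCLM p (prodJWFrom V J n t)
    have hsplit : matCLM p (prodJWFrom W J n (t + 1)) - matCLM p (prodJWFrom V J n (t + 1)) =
        DV.comp (FW - FV) + DP.comp FW := by
      simp only [DV, DP, FW, FV, prodJWFrom, matCLM_mul, hW, Matrix.mul_add, matCLM_add,
        ContinuousLinearMap.comp_sub, ContinuousLinearMap.add_comp]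
      abel
    have hFW := norm_matCLM_prodJWFrom_le p J W hDW n t
    rw [hsplit, Finset.prod_range_succ]
    calc ‖DV.comp (FW - FV) + DP.comp FW‖
        ≤ 1 * (∏ k ∈ Finset.range t, (1 + δ (n + k)) - 1) +
            δ (n + t) * ∏ k ∈ Finset.range t, (1 + δ (n + k)) :=
          norm_add_le_of_le
            ((ContinuousLinearMap.opNorm_comp_le _ _).trans
              (mul_le_mul (hV _) ih (norm_nonneg _) zero_le_one))
            ((ContinuousLinearMap.opNorm_comp_le _ _).trans
              (mul_le_mul (hP _) hFW (norm_nonneg _) ((norm_nonneg _).trans (hP _))))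
      _ = (∏ k ∈ Finset.range t, (1 + δ (n + k))) * (1 + δ (n + t)) - 1 := by ring

lemma norm_padCLM_comp_prodJW_sub_le (hW : ∀ k, W k = V k + P k)
    (hV : ∀ k, ‖matCLM p (diagonal (J k) * V k)‖ ≤ 1)
    (hP : ∀ k, ‖matCLM p (diagonal (J k) * P k)‖ ≤ δ k) (n t : ℕ) :
    ‖(padCLM p (m (n + t))).comp (matCLM p (prodJW W J (n + t))) -
        (padCLM p (m (n + t))).comp (matCLM p (prodJWFrom V J n t * prodJW W J n))‖ ≤
      (∏ k ∈ Finset.range t, (1 + δ (n + k)) - 1) * ‖matCLM p (prodJW W J n)‖ := by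
  rw [prodJW_add, matCLM_mul, matCLM_mul, ← ContinuousLinearMap.comp_sub,
    ← ContinuousLinearMap.sub_comp]
  refine (ContinuousLinearMap.opNorm_comp_le _ _).trans ?_
  refine (mul_le_of_le_one_left (norm_nonneg _) (norm_padCLM_le p)).trans ?_
  exact (ContinuousLinearMap.opNorm_comp_le _ _).trans (mul_le_mul_of_nonneg_right
    (norm_matCLM_prodJWFrom_sub_le p J hW hV hP n t) (norm_nonneg _))

end Perturbation

lemma cauchySeq_of_eventuallyConst_approx {E : Type*} [PseudoMetricSpace E] {a : ℕ → E}
    {g : ℕ → ℕ → E} {r : ℕ → ℝ} (hr : Tendsto r atTop (nhds 0))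
    (hg : ∀ n, EventuallyConst (g n) atTop) (hag : ∀ n t, dist (a (n + t)) (g n t) ≤ r n) :
    CauchySeq a := by
  refine Metric.cauchySeq_iff'.2 fun δ hδ => ?_
  obtain ⟨n, hn⟩ := (hr.eventually (gt_mem_nhds (half_pos hδ))).exists
  obtain ⟨T, hT⟩ := eventuallyConst_atTop.1 (hg n)
  refine ⟨n + T, fun k hk => ?_⟩
  obtain ⟨t, rfl⟩ := Nat.exists_eq_add_of_le (le_trans (Nat.le_add_right n T) hk)
  calc dist (a (n + t)) (a (n + T)) ≤ dist (a (n + t)) (g n t) + dist (a (n + T)) (g n T) := by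
        rw [hT t (by omega), dist_comm (a (n + T))]
        exact dist_triangle _ _ _
    _ ≤ r n + r n := add_le_add (hag n t) (hag n T)
    _ < δ := by linarith

lemma prod_one_add_le_exp_tsum {ε : ℕ → ℝ} (hε0 : ∀ k, 0 ≤ ε k) (hε : Summable ε) (n t : ℕ) :
    ∏ k ∈ Finset.range t, (1 + ε (n + k)) ≤ Real.exp (∑' k, ε (k + n)) := by
  refine (Real.prod_one_add_le_exp_sum _ fun k => hε0 _).trans (Real.exp_le_exp.2 ?_)
  simpa only [add_comm n] using
    ((summable_nat_add_iff n).2 hε).sum_le_tsum (Finset.range t) fun k _ => hε0 _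

theorem stmt4_general (p : ℝ≥0∞) [Fact (1 ≤ p)] (m : ℕ → ℕ)
    (hmono : ∀ n, m n ≤ m (n+1))
    (W P : ∀ n, Matrix (Fin (m (n+1))) (Fin (m n)) ℝ)
    (hW : ∀ n, W n = Ipad (m (n+1)) (m n) + P n)
    (hP : Summable fun n => ‖matCLM p (P n)‖)
    (J : ∀ n, Fin (m (n+1)) → ℝ) (hJ : ∀ n, ZeroOne (J n)) :
    ∃ L : PiLp p (fun _ : Fin (m 0) => ℝ) →L[ℝ] lp (fun _ : ℕ => ℝ) p,
      Tendsto (fun n => (padCLM p (m n)).comp (matCLM p (prodJW W J n)))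
        atTop (nhds L) := by
  set ε := fun n => ‖matCLM p (P n)‖
  have hε0 : ∀ k, 0 ≤ ε k := fun k => norm_nonneg _
  have hDI : ∀ k, ‖matCLM p (diagonal (J k) * Ipads m k)‖ ≤ 1 := fun k =>
    (norm_matCLM_diagonal_mul_le p (hJ k).abs_le_one _).trans (norm_matCLM_Ipad_le p (hmono k))
  have hDP : ∀ k, ‖matCLM p (diagonal (J k) * P k)‖ ≤ ε k := fun k =>
    norm_matCLM_diagonal_mul_le p (hJ k).abs_le_one _
  set C := Real.exp (∑' k, ε k)
  have hprod : ∀ n, ‖matCLM p (prodJW W J n)‖ ≤ C := fun n => by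
    refine (norm_matCLM_prodJW_le p J W (fun k => ?_) n).trans
      (by simpa using prod_one_add_le_exp_tsum hε0 hP 0 n)
    rw [hW]
    exact norm_matCLM_diagonal_mul_add_le p J hDI hDP k
  refine cauchySeq_tendsto_of_complete (cauchySeq_of_eventuallyConst_approx
    (g := fun n t => (padCLM p (m (n + t))).comp
      (matCLM p (prodJWFrom (Ipads m) J n t * prodJW W J n)))
    (r := fun n => (Real.exp (∑' k, ε (k + n)) - 1) * C) ?_
    (fun n => eventuallyConst_padCLM_comp_prodJWFrom_Ipads_mul p J hJ _) fun n t => ?_)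
  · simpa using
      (((Real.continuous_exp.tendsto 0).comp (tendsto_sum_nat_add ε)).sub_const 1).mul_const C
  · rw [dist_eq_norm]
    refine (norm_padCLM_comp_prodJW_sub_le p J hW hDI hDP n t).trans ?_
    exact mul_le_mul (sub_le_sub_right (prod_one_add_le_exp_tsum hε0 hP n t) 1) (hprod n)
      (norm_nonneg _) (sub_nonneg.2 (Real.one_le_exp (tsum_nonneg fun k => hε0 _)))

theorem stmt4 (p : ℝ≥0∞) [Fact (1 ≤ p)] (m : ℕ → ℕ) (hpos : ∀ n, 0 < m n)
    (hmono : ∀ n, m n ≤ m (n+1))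
    (W P : ∀ n, Matrix (Fin (m (n+1))) (Fin (m n)) ℝ)
    (hW : ∀ n, W n = Ipad (m (n+1)) (m n) + P n)
    (hP : Summable fun n => ‖matCLM p (P n)‖)
    (J : ∀ n, Fin (m (n+1)) → ℝ) (hJ : ∀ n, ZeroOne (J n)) :
    ∃ L : PiLp p (fun _ : Fin (m 0) => ℝ) →L[ℝ] lp (fun _ : ℕ => ℝ) p,
      Tendsto (fun n => (padCLM p (m n)).comp (matCLM p (prodJW W J n)))
        atTop (nhds L) :=
  stmt4_general p m hmono W P hW hP J hJ
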